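/- arXiv:1812.11510 — 7 statements merged into one kernel-verified Lean document; each statement's English description precedes it below -/
import Mathlib

section
/- In a residuated lattice, for a filter F and elements x, y: F(F ∪ {x}) ∩ F(F ∪ {y}) = F(F ∪ {x ∨ y}), where F(X) denotes the filter generated by X. -/
/-!
Write `Sₓ = {a | f ⊙ xⁿ ≤ a for some f ∈ F, n ∈ ℕ}` for the filter generated by `F ∪ {x}`.
Since `xⁿ ≤ (x ∨ y)ⁿ`, clearly `S_{x ∨ y} ⊆ Sₓ ∩ S_y`. Conversely, if `f ⊙ xⁿ ≤ a` and
`g ⊙ yᵐ ≤ a`, then `(x ∨ y)^{mn} ≤ xⁿ ∨ yᵐ`, and since `⊙` distributes over `∨` (it is a left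
adjoint), `(f ⊙ g) ⊙ (x ∨ y)^{mn} ≤ (f ⊙ xⁿ) ∨ (g ⊙ yᵐ) ≤ a`.
-/

universe u

class ResiduatedLattice (A : Type u) extends Lattice A, BoundedOrder A where
  mul : A → A → A
  himp : A → A → A
  mul_comm : ∀ x y : A, mul x y = mul y x
  mul_assoc : ∀ x y z : A, mul (mul x y) z = mul x (mul y z)
  mul_top : ∀ x : A, mul x ⊤ = x
  adjoint : ∀ x y z : A, mul x y ≤ z ↔ x ≤ himp y z

namespace RL

variable {A : Type u} [ResiduatedLattice A]

/-- A filter: a nonempty subset closed under the monoid operation `⊙` and closed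
under joins with arbitrary elements. -/
def IsFilter (F : Set A) : Prop :=
  F.Nonempty ∧ (∀ x ∈ F, ∀ y ∈ F, ResiduatedLattice.mul x y ∈ F) ∧
    (∀ x ∈ F, ∀ y : A, x ⊔ y ∈ F)

/-- A prime filter: a proper filter such that `x ⊔ y ∈ P` implies `x ∈ P` or `y ∈ P`. -/
def IsPrime (P : Set A) : Prop :=
  IsFilter P ∧ P ≠ Set.univ ∧ ∀ x y : A, x ⊔ y ∈ P → x ∈ P ∨ y ∈ P

/-- The filter generated by a subset `X`. -/
def Fgen (X : Set A) : Set A := ⋂₀ {G : Set A | IsFilter G ∧ X ⊆ G}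

/-- An `X`-minimal prime filter: a minimal element of the set of prime filters containing `X`. -/
def MinPrimeOver (X : Set A) (P : Set A) : Prop :=
  IsPrime P ∧ X ⊆ P ∧ ∀ Q : Set A, IsPrime Q → X ⊆ Q → Q ⊆ P → Q = P

/-- A minimal prime filter. -/
def MinPrime (P : Set A) : Prop :=
  IsPrime P ∧ ∀ Q : Set A, IsPrime Q → Q ⊆ P → Q = P

/-- The coannihilator of `X` belonging to `F`. -/
def coann (F : Set A) (X : Set A) : Set A := {a : A | ∀ x ∈ X, x ⊔ a ∈ F}

/-- `X^⊥ = {a | x ⊔ a = ⊤ for all x ∈ X}`. -/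
def perp (X : Set A) : Set A := {a : A | ∀ x ∈ X, x ⊔ a = ⊤}

/-- `D_F(P) = {a | (F : a) ⊄ P}`. -/
def DF (F P : Set A) : Set A := {a : A | ¬ coann F {a} ⊆ P}

/-- A `∨`-closed subset: nonempty and closed under joins. -/
def VClosed (C : Set A) : Prop := C.Nonempty ∧ ∀ x ∈ C, ∀ y ∈ C, x ⊔ y ∈ C

end RL

namespace RL

variable {A : Type u} [ResiduatedLattice A]

abbrev toCommMonoid : CommMonoid A where
  mul := ResiduatedLattice.mul
  one := ⊤
  mul_assoc := ResiduatedLattice.mul_assoc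
  one_mul x := (ResiduatedLattice.mul_comm _ _).trans (ResiduatedLattice.mul_top x)
  mul_one := ResiduatedLattice.mul_top
  mul_comm := ResiduatedLattice.mul_comm

attribute [local instance] toCommMonoid

theorem galoisConnection_mul_himp (y : A) :
    GaloisConnection (· * y) (ResiduatedLattice.himp y) :=
  fun x z => ResiduatedLattice.adjoint x y z

theorem isOrderedMonoid : IsOrderedMonoid A where
  mul_le_mul_left _ _ h c := (galoisConnection_mul_himp c).monotone_l h

attribute [local instance] isOrderedMonoid

protected theorem sup_mul (a b c : A) : (a ⊔ b) * c = a * c ⊔ b * c :=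
  (galoisConnection_mul_himp c).l_sup

protected theorem mul_sup (a b c : A) : a * (b ⊔ c) = a * b ⊔ a * c := by
  simp only [mul_comm a, RL.sup_mul]

theorem mul_le_left (a b : A) : a * b ≤ a :=
  mul_le_of_le_one_right' le_top

theorem mul_le_right (a b : A) : a * b ≤ b :=
  mul_le_of_le_one_left' le_top

theorem sup_mul_sup_le (a b c : A) : (a ⊔ c) * (b ⊔ c) ≤ a * b ⊔ c := by
  rw [RL.mul_sup, RL.sup_mul, RL.sup_mul]
  exact sup_le (sup_le_sup_left (mul_le_left c b) _)
    (sup_le (le_sup_of_le_right (mul_le_right a c)) (le_sup_of_le_right (mul_le_left c c)))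

theorem pow_sup_le (x z : A) : ∀ n : ℕ, (x ⊔ z) ^ n ≤ x ^ n ⊔ z
  | 0 => le_sup_left
  | n + 1 => calc
      (x ⊔ z) ^ (n + 1) ≤ (x ^ n ⊔ z) * (x ⊔ z) := by
        rw [pow_succ]; exact mul_le_mul_left (pow_sup_le x z n) _
      _ ≤ x ^ (n + 1) ⊔ z := by
        rw [pow_succ]; exact sup_mul_sup_le _ _ _

theorem sup_pow_mul_le (x y : A) (m n : ℕ) : (x ⊔ y) ^ (m * n) ≤ x ^ n ⊔ y ^ m := calc
  (x ⊔ y) ^ (m * n) = ((y ⊔ x) ^ m) ^ n := by rw [sup_comm, pow_mul]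
  _ ≤ (x ⊔ y ^ m) ^ n := pow_le_pow_left' ((pow_sup_le y x m).trans_eq (sup_comm _ _)) n
  _ ≤ x ^ n ⊔ y ^ m := pow_sup_le x (y ^ m) n

namespace IsFilter

variable {G : Set A}

theorem mem_of_le (hG : IsFilter G) {a b : A} (ha : a ∈ G) (h : a ≤ b) : b ∈ G := by
  simpa only [sup_eq_right.mpr h] using hG.2.2 a ha b

theorem mul_mem (hG : IsFilter G) {a b : A} (ha : a ∈ G) (hb : b ∈ G) : a * b ∈ G :=
  hG.2.1 a ha b hb

theorem one_mem (hG : IsFilter G) : (1 : A) ∈ G :=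
  hG.1.elim fun _ ha => hG.mem_of_le ha le_top

theorem pow_mem (hG : IsFilter G) {a : A} (ha : a ∈ G) : ∀ n : ℕ, a ^ n ∈ G
  | 0 => hG.one_mem
  | n + 1 => by rw [pow_succ]; exact hG.mul_mem (pow_mem hG ha n) ha

end IsFilter

theorem isFilter_Fgen (X : Set A) : IsFilter (Fgen X) := by
  refine ⟨⟨1, fun G hG => hG.1.one_mem⟩, ?_, ?_⟩
  · exact fun a ha b hb G hG => hG.1.mul_mem (ha G hG) (hb G hG)
  · exact fun a ha b G hG => hG.1.2.2 a (ha G hG) b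

theorem subset_Fgen (X : Set A) : X ⊆ Fgen X :=
  fun _ ha _ hG => hG.2 ha

theorem Fgen_subset {X G : Set A} (hG : IsFilter G) (hX : X ⊆ G) : Fgen X ⊆ G :=
  Set.sInter_subset_of_mem ⟨hG, hX⟩

def adjoinFilter (F : Set A) (x : A) : Set A :=
  {a | ∃ f ∈ F, ∃ n : ℕ, f * x ^ n ≤ a}

theorem isFilter_adjoinFilter {F : Set A} (hF : IsFilter F) (x : A) :
    IsFilter (adjoinFilter F x) := by
  obtain ⟨f₀, hf₀⟩ := hF.1
  refine ⟨⟨f₀, f₀, hf₀, 0, (mul_one f₀).le⟩, ?_, ?_⟩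
  · rintro a ⟨f, hf, n, hfa⟩ b ⟨g, hg, m, hgb⟩
    refine ⟨f * g, hF.mul_mem hf hg, n + m, ?_⟩
    calc f * g * x ^ (n + m) = f * x ^ n * (g * x ^ m) := by rw [pow_add]; ac_rfl
      _ ≤ a * b := mul_le_mul' hfa hgb
  · rintro a ⟨f, hf, n, hfa⟩ b
    exact ⟨f, hf, n, hfa.trans le_sup_left⟩

theorem Fgen_union_singleton {F : Set A} (hF : IsFilter F) (x : A) :
    Fgen (F ∪ {x}) = adjoinFilter F x := by
  apply le_antisymm
  · refine Fgen_subset (isFilter_adjoinFilter hF x) (Set.union_subset ?_ ?_)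
    · exact fun f hf => ⟨f, hf, 0, (mul_one f).le⟩
    · obtain ⟨f₀, hf₀⟩ := hF.1
      exact Set.singleton_subset_iff.mpr ⟨f₀, hf₀, 1, (pow_one x).symm ▸ mul_le_right f₀ x⟩
  · rintro a ⟨f, hf, n, hfa⟩
    have hGen := isFilter_Fgen (F ∪ {x})
    have hx : x ∈ Fgen (F ∪ {x}) := subset_Fgen _ (Or.inr rfl)
    exact hGen.mem_of_le (hGen.mul_mem (subset_Fgen _ (Or.inl hf)) (hGen.pow_mem hx n)) hfa

theorem adjoinFilter_inter_adjoinFilter {F : Set A} (hF : IsFilter F) (x y : A) :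
    adjoinFilter F x ∩ adjoinFilter F y = adjoinFilter F (x ⊔ y) := by
  ext a
  constructor
  · rintro ⟨⟨f, hf, n, hfa⟩, ⟨g, hg, m, hga⟩⟩
    refine ⟨f * g, hF.mul_mem hf hg, m * n, ?_⟩
    calc f * g * (x ⊔ y) ^ (m * n) ≤ f * g * (x ^ n ⊔ y ^ m) :=
          mul_le_mul_right (sup_pow_mul_le x y m n) _
      _ = f * g * x ^ n ⊔ f * g * y ^ m := RL.mul_sup _ _ _
      _ ≤ a := sup_le ((mul_le_mul_left (mul_le_left f g) _).trans hfa)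
          ((mul_le_mul_left (mul_le_right f g) _).trans hga)
  · rintro ⟨f, hf, n, hfa⟩
    exact ⟨⟨f, hf, n, le_trans (mul_le_mul_right (pow_le_pow_left' le_sup_left n) f) hfa⟩,
      ⟨f, hf, n, le_trans (mul_le_mul_right (pow_le_pow_left' le_sup_right n) f) hfa⟩⟩

end RL

theorem fgen_inter_sup {A : Type u} [ResiduatedLattice A] (F : Set A) (hF : RL.IsFilter F)
    (x y : A) :
    RL.Fgen (F ∪ {x}) ∩ RL.Fgen (F ∪ {y}) = RL.Fgen (F ∪ {x ⊔ y}) := by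
  rw [RL.Fgen_union_singleton hF, RL.Fgen_union_singleton hF, RL.Fgen_union_singleton hF,
    RL.adjoinFilter_inter_adjoinFilter hF]
end

section
/- Minimal prime filter theorem: let F be a filter of a residuated lattice A. A subset P of A is an F-minimal prime filter (a minimal element of the set of prime filters containing F) if and only if its complement Pᶜ is a ∨-closed subset of A that is maximal among ∨-closed subsets not meeting F. -/
universe u

namespace RLAux

variable {A : Type u} [ResiduatedLattice A]

instance : CommMonoid A where
  mul := ResiduatedLattice.mul
  one := ⊤
  mul_assoc := ResiduatedLattice.mul_assoc
  mul_comm := ResiduatedLattice.mul_comm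
  mul_one := ResiduatedLattice.mul_top
  one_mul := fun x => by
    show ResiduatedLattice.mul ⊤ x = x
    rw [ResiduatedLattice.mul_comm]; exact ResiduatedLattice.mul_top x

lemma mul_def (x y : A) : ResiduatedLattice.mul x y = x * y := rfl

lemma top_eq_one : (⊤ : A) = 1 := rfl

lemma adj (x y z : A) : x * y ≤ z ↔ x ≤ ResiduatedLattice.himp y z :=
  ResiduatedLattice.adjoint x y z

lemma mul_mono_left {x y : A} (h : x ≤ y) (z : A) : x * z ≤ y * z :=
  (adj ..).mpr (h.trans ((adj ..).mp le_rfl))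

lemma mul_mono_right {x y : A} (h : x ≤ y) (z : A) : z * x ≤ z * y := by
  rw [mul_comm z x, mul_comm z y]; exact mul_mono_left h z

lemma mul_le_right (x y : A) : x * y ≤ y := by
  have h := mul_mono_left (le_top (a := x)) y
  rwa [top_eq_one, one_mul] at h

lemma mul_le_left (x y : A) : x * y ≤ x := by rw [mul_comm]; exact mul_le_right y x

lemma sup_mul_le_iff {x y z w : A} : (x ⊔ y) * z ≤ w ↔ x * z ≤ w ∧ y * z ≤ w := by
  rw [adj, adj, adj, sup_le_iff]

lemma sup_mul_le (x y z : A) : (x ⊔ y) * z ≤ x * z ⊔ y * z :=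
  sup_mul_le_iff.mpr ⟨le_sup_left, le_sup_right⟩

lemma mul_sup_le (x y z : A) : x * (y ⊔ z) ≤ x * y ⊔ x * z := by
  rw [mul_comm, mul_comm x y, mul_comm x z]; exact sup_mul_le y z x

lemma mem_of_le {G : Set A} (hG : RL.IsFilter G) {x y : A} (hx : x ∈ G) (h : x ≤ y) : y ∈ G := by
  have := hG.2.2 x hx y
  rwa [sup_eq_right.mpr h] at this

lemma top_mem {G : Set A} (hG : RL.IsFilter G) : (⊤ : A) ∈ G := by
  obtain ⟨x, hx⟩ := hG.1
  exact mem_of_le hG hx le_top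

lemma mul_mem {G : Set A} (hG : RL.IsFilter G) {x y : A} (hx : x ∈ G) (hy : y ∈ G) :
    x * y ∈ G := hG.2.1 x hx y hy

lemma pow_mem {G : Set A} (hG : RL.IsFilter G) {x : A} (hx : x ∈ G) (n : ℕ) : x ^ n ∈ G := by
  induction n with
  | zero => rw [pow_zero, ← top_eq_one]; exact top_mem hG
  | succ n ih => rw [pow_succ]; exact mul_mem hG ih hx

lemma sup_pow_le (x y : A) : ∀ k n m : ℕ, n + m = k → (x ⊔ y) ^ k ≤ x ^ n ⊔ y ^ m := by
  intro k
  induction k with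
  | zero =>
    intro n m h
    obtain ⟨rfl, rfl⟩ := Nat.add_eq_zero.mp h
    simp
  | succ k ih =>
    intro n m h
    rcases n with _ | n'
    · rw [pow_zero, ← top_eq_one]
      exact le_top.trans le_sup_left
    rcases m with _ | m'
    · rw [pow_zero, ← top_eq_one]
      exact le_top.trans le_sup_right
    have hk1 : n' + (m' + 1) = k := by omega
    have hk2 : (n' + 1) + m' = k := by omega
    calc (x ⊔ y) ^ (k + 1) = (x ⊔ y) ^ k * (x ⊔ y) := pow_succ _ _
      _ ≤ (x ⊔ y) ^ k * x ⊔ (x ⊔ y) ^ k * y := mul_sup_le _ _ _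
      _ ≤ x ^ (n' + 1) ⊔ y ^ (m' + 1) := by
          apply sup_le
          · calc (x ⊔ y) ^ k * x ≤ (x ^ n' ⊔ y ^ (m' + 1)) * x := mul_mono_left (ih _ _ hk1) x
              _ ≤ x ^ n' * x ⊔ y ^ (m' + 1) * x := sup_mul_le _ _ _
              _ ≤ x ^ (n' + 1) ⊔ y ^ (m' + 1) := by
                  rw [← pow_succ]
                  exact sup_le_sup_left (mul_le_left _ _) _
          · calc (x ⊔ y) ^ k * y ≤ (x ^ (n' + 1) ⊔ y ^ m') * y := mul_mono_left (ih _ _ hk2) y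
              _ ≤ x ^ (n' + 1) * y ⊔ y ^ m' * y := sup_mul_le _ _ _
              _ ≤ x ^ (n' + 1) ⊔ y ^ (m' + 1) := by
                  rw [← pow_succ]
                  exact sup_le_sup_right (mul_le_left _ _) _

/-- The filter generated by a filter `G` and an element `x`. -/
def gen (G : Set A) (x : A) : Set A := {a | ∃ g ∈ G, ∃ n : ℕ, g * x ^ n ≤ a}

lemma subset_gen {G : Set A} (x : A) : G ⊆ gen G x := by
  intro g hg
  exact ⟨g, hg, 0, by rw [pow_zero, mul_one]⟩

lemma mem_gen {G : Set A} (hG : RL.IsFilter G) (x : A) : x ∈ gen G x :=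
  ⟨⊤, top_mem hG, 1, by rw [pow_one, top_eq_one, one_mul]⟩

lemma gen_filter {G : Set A} (hG : RL.IsFilter G) (x : A) : RL.IsFilter (gen G x) := by
  refine ⟨hG.1.mono (subset_gen x), ?_, ?_⟩
  · rintro a ⟨g₁, hg₁, n₁, h₁⟩ b ⟨g₂, hg₂, n₂, h₂⟩
    refine ⟨g₁ * g₂, mul_mem hG hg₁ hg₂, n₁ + n₂, ?_⟩
    show g₁ * g₂ * x ^ (n₁ + n₂) ≤ a * b
    rw [pow_add, mul_mul_mul_comm]
    exact le_trans (mul_mono_left h₁ _) (mul_mono_right h₂ _)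
  · rintro a ⟨g, hg, n, h⟩ y
    exact ⟨g, hg, n, h.trans le_sup_left⟩

/-- Separation: a `∨`-closed set disjoint from a filter can be separated by a prime filter. -/
lemma exists_prime {F C : Set A} (hF : RL.IsFilter F) (hC : RL.VClosed C)
    (hdisj : F ∩ C = ∅) : ∃ Q : Set A, RL.IsPrime Q ∧ F ⊆ Q ∧ Q ∩ C = ∅ := by
  set S : Set (Set A) := {G | RL.IsFilter G ∧ F ⊆ G ∧ G ∩ C = ∅} with hS
  have hub : ∀ c ⊆ S, IsChain (· ⊆ ·) c → c.Nonempty → ∃ ub ∈ S, ∀ s ∈ c, s ⊆ ub := by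
    intro c hcS hchain hcne
    refine ⟨⋃₀ c, ⟨⟨?_, ?_, ?_⟩, ?_, ?_⟩, ?_⟩
    · obtain ⟨G, hG⟩ := hcne
      obtain ⟨g, hg⟩ := (hcS hG).1.1
      exact ⟨g, G, hG, hg⟩
    · rintro a ⟨G₁, hG₁, ha⟩ b ⟨G₂, hG₂, hb⟩
      rcases hchain.total hG₁ hG₂ with h | h
      · exact ⟨G₂, hG₂, (hcS hG₂).1.2.1 a (h ha) b hb⟩
      · exact ⟨G₁, hG₁, (hcS hG₁).1.2.1 a ha b (h hb)⟩
    · rintro a ⟨G, hG, ha⟩ y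
      exact ⟨G, hG, (hcS hG).1.2.2 a ha y⟩
    · obtain ⟨G, hG⟩ := hcne
      exact (hcS hG).2.1.trans (Set.subset_sUnion_of_mem hG)
    · rw [Set.eq_empty_iff_forall_notMem]
      rintro a ⟨⟨G, hG, haG⟩, haC⟩
      have : a ∈ G ∩ C := ⟨haG, haC⟩
      exact Set.eq_empty_iff_forall_notMem.mp (hcS hG).2.2 _ this
    · exact fun G hG => Set.subset_sUnion_of_mem hG
  obtain ⟨Q, hFQ, hQS, hQmax⟩ := zorn_subset_nonempty S hub F ⟨hF, subset_rfl, hdisj⟩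
  refine ⟨Q, ⟨hQS.1, ?_, ?_⟩, hQS.2.1, hQS.2.2⟩
  · intro hQu
    obtain ⟨c, hc⟩ := hC.1
    have : c ∈ Q ∩ C := ⟨hQu ▸ Set.mem_univ c, hc⟩
    exact Set.eq_empty_iff_forall_notMem.mp hQS.2.2 _ this
  · intro x y hxy
    by_contra hcon
    push_neg at hcon
    obtain ⟨hx, hy⟩ := hcon
    -- both generated filters must meet C
    have hmeet : ∀ z : A, z ∉ Q → ∃ c ∈ C, ∃ g ∈ Q, ∃ n : ℕ, g * z ^ n ≤ c := by
      intro z hz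
      by_contra hcc
      push_neg at hcc
      have hgenS : gen Q z ∈ S := by
        refine ⟨gen_filter hQS.1 z, hQS.2.1.trans (subset_gen z), ?_⟩
        rw [Set.eq_empty_iff_forall_notMem]
        rintro a ⟨⟨g, hg, n, hle⟩, haC⟩
        exact hcc a haC g hg n hle
      have := hQmax hgenS (subset_gen z)
      exact hz (this (mem_gen hQS.1 z))
    obtain ⟨c₁, hc₁, g₁, hg₁, n₁, h₁⟩ := hmeet x hx
    obtain ⟨c₂, hc₂, g₂, hg₂, n₂, h₂⟩ := hmeet y hy
    have hgQ : g₁ * g₂ * (x ⊔ y) ^ (n₁ + n₂) ∈ Q :=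
      mul_mem hQS.1 (mul_mem hQS.1 hg₁ hg₂) (pow_mem hQS.1 hxy _)
    have hle : g₁ * g₂ * (x ⊔ y) ^ (n₁ + n₂) ≤ c₁ ⊔ c₂ := by
      calc g₁ * g₂ * (x ⊔ y) ^ (n₁ + n₂)
          ≤ g₁ * g₂ * (x ^ n₁ ⊔ y ^ n₂) := mul_mono_right (sup_pow_le x y _ _ _ rfl) _
        _ ≤ g₁ * g₂ * x ^ n₁ ⊔ g₁ * g₂ * y ^ n₂ := mul_sup_le _ _ _
        _ ≤ c₁ ⊔ c₂ := by
            apply sup_le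
            · exact le_trans (mul_mono_left (mul_le_left g₁ g₂) _) (h₁.trans le_sup_left)
            · exact le_trans (mul_mono_left (mul_le_right g₁ g₂) _) (h₂.trans le_sup_right)
    have hcQ : c₁ ⊔ c₂ ∈ Q := mem_of_le hQS.1 hgQ hle
    have hcC : c₁ ⊔ c₂ ∈ C := hC.2 c₁ hc₁ c₂ hc₂
    have : c₁ ⊔ c₂ ∈ Q ∩ C := ⟨hcQ, hcC⟩
    exact Set.eq_empty_iff_forall_notMem.mp hQS.2.2 _ this

end RLAux

/-- The complement of a prime filter is `∨`-closed. -/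
lemma prime_compl_vclosed {A : Type u} [ResiduatedLattice A] {Q : Set A}
    (hQ : RL.IsPrime Q) : RL.VClosed Qᶜ := by
  refine ⟨Set.nonempty_compl.mpr hQ.2.1, fun x hx y hy => ?_⟩
  intro hxy
  rcases hQ.2.2 x y hxy with h | h
  · exact hx h
  · exact hy h

theorem minimal_prime_filter_theorem {A : Type u} [ResiduatedLattice A] (F : Set A)
    (hF : RL.IsFilter F) (P : Set A) :
    RL.MinPrimeOver F P ↔
      (RL.VClosed Pᶜ ∧ Pᶜ ∩ F = ∅ ∧
        ∀ C : Set A, RL.VClosed C → C ∩ F = ∅ → Pᶜ ⊆ C → C = Pᶜ) := by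
  constructor
  · rintro ⟨hP, hFP, hmin⟩
    have hVC : RL.VClosed Pᶜ := prime_compl_vclosed hP
    have hPF : Pᶜ ∩ F = ∅ := by
      rw [Set.eq_empty_iff_forall_notMem]
      rintro a ⟨haPc, haF⟩
      exact haPc (hFP haF)
    refine ⟨hVC, hPF, fun C hC hCF hPC => ?_⟩
    have hFC : F ∩ C = ∅ := by rw [Set.inter_comm]; exact hCF
    obtain ⟨Q, hQ, hFQ, hQC⟩ := RLAux.exists_prime hF hC hFC
    have hQP : Q ⊆ P := by
      intro q hq
      by_contra hqP
      exact Set.eq_empty_iff_forall_notMem.mp hQC q ⟨hq, hPC hqP⟩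
    have hQeq := hmin Q hQ hFQ hQP
    apply Set.Subset.antisymm
    · intro x hxC hxP
      have hxQ : x ∈ Q := hQeq ▸ hxP
      exact Set.eq_empty_iff_forall_notMem.mp hQC x ⟨hxQ, hxC⟩
    · exact hPC
  · rintro ⟨hVC, hPF, hmax⟩
    have hFP : F ⊆ P := by
      intro f hf
      by_contra hfP
      exact Set.eq_empty_iff_forall_notMem.mp hPF f ⟨hfP, hf⟩
    -- key characterization of membership in `P`
    have key : ∀ a : A, a ∈ P ↔ ∃ c ∈ Pᶜ, a ⊔ c ∈ F := by
      intro a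
      constructor
      · intro haP
        set C' : Set A := {x | x ∈ Pᶜ ∨ x = a ∨ ∃ c ∈ Pᶜ, x = a ⊔ c} with hC'
        have hsub : Pᶜ ⊆ C' := fun x hx => Or.inl hx
        have haC' : a ∈ C' := Or.inr (Or.inl rfl)
        have hVC' : RL.VClosed C' := by
          refine ⟨⟨a, haC'⟩, ?_⟩
          rintro x (hx | rfl | ⟨c₁, hc₁, rfl⟩) y (hy | rfl | ⟨c₂, hc₂, rfl⟩)
          · exact Or.inl (hVC.2 x hx y hy)
          · exact Or.inr (Or.inr ⟨x, hx, sup_comm _ _⟩)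
          · exact Or.inr (Or.inr ⟨x ⊔ c₂, hVC.2 x hx c₂ hc₂, sup_left_comm _ _ _⟩)
          · exact Or.inr (Or.inr ⟨y, hy, rfl⟩)
          · exact Or.inr (Or.inl (sup_idem _))
          · exact Or.inr (Or.inr ⟨c₂, hc₂, by rw [← sup_assoc, sup_idem]⟩)
          · exact Or.inr (Or.inr ⟨c₁ ⊔ y, hVC.2 c₁ hc₁ y hy, sup_assoc _ _ _⟩)
          · exact Or.inr (Or.inr ⟨c₁, hc₁, by rw [sup_right_comm, sup_idem]⟩)
          · exact Or.inr (Or.inr ⟨c₁ ⊔ c₂, hVC.2 c₁ hc₁ c₂ hc₂,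
              (sup_sup_sup_comm _ _ _ _).trans (by rw [sup_idem])⟩)
        have hne : C' ∩ F ≠ ∅ := by
          intro h
          have := hmax C' hVC' h hsub
          exact (this ▸ haC' : a ∈ Pᶜ) haP
        obtain ⟨f, hfC', hfF⟩ := Set.inter_nonempty.mp (Set.nonempty_iff_ne_empty.mpr hne)
        have hfP : f ∉ Pᶜ := fun hfPc =>
          Set.eq_empty_iff_forall_notMem.mp hPF f ⟨hfPc, hfF⟩
        rcases hfC' with hfPc | rfl | ⟨c, hc, rfl⟩
        · exact absurd hfPc hfP
        · obtain ⟨c₀, hc₀⟩ := hVC.1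
          exact ⟨c₀, hc₀, hF.2.2 f hfF c₀⟩
        · exact ⟨c, hc, hfF⟩
      · rintro ⟨c, hc, hacF⟩
        by_contra haP
        have : a ⊔ c ∈ Pᶜ := hVC.2 a haP c hc
        exact Set.eq_empty_iff_forall_notMem.mp hPF _ ⟨this, hacF⟩
    have hPfilter : RL.IsFilter P := by
      refine ⟨?_, ?_, ?_⟩
      · obtain ⟨f, hf⟩ := hF.1
        exact ⟨f, hFP hf⟩
      · intro a haP b hbP
        obtain ⟨c, hc, hacF⟩ := (key a).mp haP
        obtain ⟨d, hd, hbdF⟩ := (key b).mp hbP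
        set e := c ⊔ d with he'
        have he : e ∈ Pᶜ := hVC.2 c hc d hd
        have haeF : a ⊔ e ∈ F := by
          rw [he', ← sup_assoc]
          exact hF.2.2 _ hacF d
        have hbeF : b ⊔ e ∈ F := by
          rw [he', sup_comm c d, ← sup_assoc]
          exact hF.2.2 _ hbdF c
        have hprod : (a ⊔ e) * (b ⊔ e) ∈ F := hF.2.1 _ haeF _ hbeF
        have hle : (a ⊔ e) * (b ⊔ e) ≤ a * b ⊔ e := by
          calc (a ⊔ e) * (b ⊔ e) ≤ a * (b ⊔ e) ⊔ e * (b ⊔ e) := RLAux.sup_mul_le _ _ _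
            _ ≤ (a * b ⊔ a * e) ⊔ e := sup_le_sup (RLAux.mul_sup_le _ _ _) (RLAux.mul_le_left _ _)
            _ ≤ a * b ⊔ e := by
                apply sup_le
                · exact sup_le le_sup_left ((RLAux.mul_le_right a e).trans le_sup_right)
                · exact le_sup_right
        have hmem : a * b ⊔ e ∈ F := RLAux.mem_of_le hF hprod hle
        exact (key _).mpr ⟨e, he, hmem⟩
      · intro a haP y
        obtain ⟨c, hc, hacF⟩ := (key a).mp haP
        refine (key _).mpr ⟨c, hc, ?_⟩
        rw [sup_right_comm]
        exact hF.2.2 _ hacF y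
    have hPprime : RL.IsPrime P := by
      refine ⟨hPfilter, ?_, ?_⟩
      · intro h
        obtain ⟨x, hx⟩ := hVC.1
        exact hx (h ▸ Set.mem_univ x)
      · intro x y hxy
        by_contra hcon
        push_neg at hcon
        exact hVC.2 x hcon.1 y hcon.2 hxy
    refine ⟨hPprime, hFP, ?_⟩
    intro Q hQ hFQ hQP
    have hQc : RL.VClosed Qᶜ := prime_compl_vclosed hQ
    have hQcF : Qᶜ ∩ F = ∅ := by
      rw [Set.eq_empty_iff_forall_notMem]
      rintro a ⟨haQc, haF⟩
      exact haQc (hFQ haF)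
    have := hmax Qᶜ hQc hQcF (Set.compl_subset_compl.mpr hQP)
    exact compl_injective this
end

section
/- Let Π be a collection of prime filters of a residuated lattice A and X ⊆ A. Then (⋂Π : X) = ⋂{P ∈ Π | X ⊄ P}, where (F : X) = {a ∈ A | x ∨ a ∈ F for all x ∈ X}. -/
universe u

namespace RL

variable {A : Type u} [ResiduatedLattice A]

theorem coann_sInter_eq_biInter (𝔓 : Set (Set A)) (X : Set A) :
    coann (⋂₀ 𝔓) X = ⋂ P ∈ 𝔓, coann P X := by
  ext a
  simp only [coann, Set.mem_iInter, Set.mem_sInter, Set.mem_ofPred_eq]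
  exact forall₂_comm

theorem IsFilter.coann_eq_univ {F X : Set A} (hF : IsFilter F) (hXF : X ⊆ F) :
    coann F X = Set.univ :=
  Set.eq_univ_of_forall fun a x hx => hF.2.2 x (hXF hx) a

theorem IsPrime.coann_eq_self {P X : Set A} (hP : IsPrime P) (hXP : ¬X ⊆ P) :
    coann P X = P := by
  obtain ⟨x, hxX, hxP⟩ := Set.not_subset.mp hXP
  ext a
  constructor
  · intro ha
    exact (hP.2.2 x a (ha x hxX)).resolve_left hxP
  · intro ha y _
    exact sup_comm a y ▸ hP.1.2.2 a ha y

end RL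

theorem coann_sInter {A : Type u} [ResiduatedLattice A] (𝔓 : Set (Set A))
    (h𝔓 : ∀ P ∈ 𝔓, RL.IsPrime P) (X : Set A) :
    RL.coann (⋂₀ 𝔓) X = ⋂₀ {P : Set A | P ∈ 𝔓 ∧ ¬ X ⊆ P} := by
  rw [RL.coann_sInter_eq_biInter, Set.sInter_eq_biInter]
  ext a
  simp only [Set.mem_iInter, Set.mem_ofPred_eq, and_imp]
  refine forall₂_congr fun P hP => ?_
  by_cases hXP : X ⊆ P
  · simp [(h𝔓 P hP).1.coann_eq_univ hXP, hXP]
  · simp [(h𝔓 P hP).coann_eq_self hXP, hXP]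
end

section
/- In a residuated lattice, for any subset X, the coannihilator X^⊥ = {a ∈ A | x ∨ a = 1 for all x ∈ X} equals the intersection of all prime filters not containing X, and also equals the intersection of all minimal prime filters not containing X. -/
universe u

/-!
If `a ∈ X^⊥` and a prime filter `P` misses some `x ∈ X`, then `x ⊔ a = ⊤ ∈ P` forces
`a ∈ P`. Conversely, if `x ⊔ a ≠ ⊤` for some `x ∈ X`, a filter maximal among those avoiding
`x ⊔ a` (Zorn) is prime, and by Zorn again it contains a minimal prime filter, which misses
both `x` and `a`. Primality of the maximal filter rests on `(u ⊔ v)ⁿ⁺ᵐ ≤ uⁿ ⊔ vᵐ`: if the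
filters generated by `P ∪ {u}` and `P ∪ {v}` both reach `x ⊔ a`, so does `P` itself whenever
`u ⊔ v ∈ P`.
-/

namespace RL

variable {A : Type u} [ResiduatedLattice A]

instance : CommMonoid A where
  mul := ResiduatedLattice.mul
  one := ⊤
  mul_assoc := ResiduatedLattice.mul_assoc
  mul_comm := ResiduatedLattice.mul_comm
  mul_one := ResiduatedLattice.mul_top
  one_mul x := (ResiduatedLattice.mul_comm _ _).trans (ResiduatedLattice.mul_top x)

theorem one_eq_top : (1 : A) = ⊤ := rfl

theorem le_one (a : A) : a ≤ 1 := le_top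

theorem mul_le_iff_le_himp {x y z : A} : x * y ≤ z ↔ x ≤ ResiduatedLattice.himp y z :=
  ResiduatedLattice.adjoint x y z

instance : IsOrderedMonoid A where
  mul_le_mul_left _ _ h _ :=
    mul_le_iff_le_himp.2 (h.trans (mul_le_iff_le_himp.1 le_rfl))

theorem sup_mul_le_iff {x y z w : A} : (x ⊔ y) * z ≤ w ↔ x * z ≤ w ∧ y * z ≤ w := by
  simp only [mul_le_iff_le_himp, sup_le_iff]

protected theorem sup_mul_s9 (x y z : A) : (x ⊔ y) * z = x * z ⊔ y * z :=
  le_antisymm (sup_mul_le_iff.2 ⟨le_sup_left, le_sup_right⟩)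
    (sup_le (mul_le_mul_left le_sup_left z) (mul_le_mul_left le_sup_right z))

protected theorem mul_sup_s9 (x y z : A) : x * (y ⊔ z) = x * y ⊔ x * z := by
  simp only [mul_comm x, RL.sup_mul_s9]

theorem pow_sup_le_sup_pow (u v : A) (n m : ℕ) : (u ⊔ v) ^ (n + m) ≤ u ^ n ⊔ v ^ m := by
  induction n generalizing m with
  | zero => simp [one_eq_top]
  | succ n ihn =>
    induction m with
    | zero => simp [one_eq_top]
    | succ m ihm =>
      have hu : u * (u ⊔ v) ^ (n + (m + 1)) ≤ u ^ (n + 1) ⊔ v ^ (m + 1) :=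
        calc u * (u ⊔ v) ^ (n + (m + 1)) ≤ u * (u ^ n ⊔ v ^ (m + 1)) :=
              mul_le_mul_right (ihn _) u
          _ = u ^ (n + 1) ⊔ u * v ^ (m + 1) := by rw [RL.mul_sup_s9, ← pow_succ']
          _ ≤ u ^ (n + 1) ⊔ v ^ (m + 1) := sup_le_sup_left (mul_le_of_le_one_left' (le_one u)) _
      have hv : v * (u ⊔ v) ^ (n + 1 + m) ≤ u ^ (n + 1) ⊔ v ^ (m + 1) :=
        calc v * (u ⊔ v) ^ (n + 1 + m) ≤ v * (u ^ (n + 1) ⊔ v ^ m) := mul_le_mul_right ihm v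
          _ = v * u ^ (n + 1) ⊔ v ^ (m + 1) := by rw [RL.mul_sup_s9, pow_succ' v]
          _ ≤ u ^ (n + 1) ⊔ v ^ (m + 1) :=
              sup_le_sup_right (mul_le_of_le_one_left' (le_one v)) _
      rw [show n + 1 + (m + 1) = n + 1 + m + 1 by omega, pow_succ', RL.sup_mul_s9]
      rw [show n + 1 + m = n + (m + 1) by omega] at hv ⊢
      exact sup_le hu hv

namespace IsFilter

variable {F : Set A}

theorem mul_mem_s9 (hF : IsFilter F) {x y : A} (hx : x ∈ F) (hy : y ∈ F) : x * y ∈ F :=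
  hF.2.1 x hx y hy

theorem mem_of_le_s9 (hF : IsFilter F) {x y : A} (hx : x ∈ F) (h : x ≤ y) : y ∈ F := by
  simpa [sup_eq_right.2 h] using hF.2.2 x hx y

theorem top_mem (hF : IsFilter F) : (⊤ : A) ∈ F :=
  hF.1.elim fun _ hx => hF.mem_of_le_s9 hx le_top

theorem pow_mem_s9 (hF : IsFilter F) {u : A} (hu : u ∈ F) (n : ℕ) : u ^ n ∈ F := by
  induction n with
  | zero => exact hF.top_mem
  | succ n ih => exact pow_succ u n ▸ hF.mul_mem_s9 ih hu

end IsFilter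

theorem isFilter_top : IsFilter ({⊤} : Set A) := by
  refine ⟨Set.singleton_nonempty _, ?_, ?_⟩
  · rintro x rfl y rfl
    exact ResiduatedLattice.mul_top ⊤
  · rintro x rfl y
    exact top_sup_eq y

theorem isFilter_sUnion {c : Set (Set A)} (hc : ∀ F ∈ c, IsFilter F)
    (hchain : IsChain (· ⊆ ·) c) (hne : c.Nonempty) : IsFilter (⋃₀ c) := by
  obtain ⟨F, hF⟩ := hne
  refine ⟨⟨⊤, F, hF, (hc F hF).top_mem⟩, ?_, ?_⟩
  · rintro x ⟨F₁, hF₁, hx⟩ y ⟨F₂, hF₂, hy⟩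
    rcases hchain.total hF₁ hF₂ with h | h
    · exact ⟨F₂, hF₂, (hc F₂ hF₂).mul_mem_s9 (h hx) hy⟩
    · exact ⟨F₁, hF₁, (hc F₁ hF₁).mul_mem_s9 hx (h hy)⟩
  · rintro x ⟨F, hF, hx⟩ y
    exact ⟨F, hF, (hc F hF).2.2 x hx y⟩

theorem isPrime_sInter {c : Set (Set A)} (hc : ∀ P ∈ c, IsPrime P)
    (hchain : IsChain (· ⊆ ·) c) (hne : c.Nonempty) : IsPrime (⋂₀ c) := by
  obtain ⟨P, hP⟩ := hne
  refine ⟨⟨⟨⊤, fun Q hQ => (hc Q hQ).1.top_mem⟩, ?_, ?_⟩, ?_, ?_⟩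
  · exact fun x hx y hy Q hQ => (hc Q hQ).1.mul_mem_s9 (hx Q hQ) (hy Q hQ)
  · exact fun x hx y Q hQ => (hc Q hQ).1.2.2 x (hx Q hQ) y
  · exact fun h => (hc P hP).2.1 (Set.eq_univ_of_univ_subset (h ▸ Set.sInter_subset_of_mem hP))
  · intro x y hxy
    by_contra! h
    obtain ⟨⟨Q₁, hQ₁, hx⟩, ⟨Q₂, hQ₂, hy⟩⟩ :
        (∃ Q ∈ c, x ∉ Q) ∧ ∃ Q ∈ c, y ∉ Q := by simpa [Set.mem_sInter] using h
    rcases hchain.total hQ₁ hQ₂ with h₁₂ | h₂₁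
    · exact ((hc Q₁ hQ₁).2.2 x y (hxy Q₁ hQ₁)).elim hx (fun hy₁ => hy (h₁₂ hy₁))
    · exact ((hc Q₂ hQ₂).2.2 x y (hxy Q₂ hQ₂)).elim (fun hx₂ => hx (h₂₁ hx₂)) hy

/-- The filter generated by `F ∪ {u}`. -/
def adjoin (F : Set A) (u : A) : Set A := {z | ∃ p ∈ F, ∃ n : ℕ, p * u ^ n ≤ z}

theorem subset_adjoin (F : Set A) (u : A) : F ⊆ adjoin F u :=
  fun p hp => ⟨p, hp, 0, by rw [pow_zero, mul_one]⟩

theorem mem_adjoin_self {F : Set A} (hF : IsFilter F) (u : A) : u ∈ adjoin F u :=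
  ⟨1, hF.top_mem, 1, by rw [one_mul, pow_one]⟩

theorem IsFilter.adjoin {F : Set A} (hF : IsFilter F) (u : A) : IsFilter (adjoin F u) := by
  refine ⟨⟨u, mem_adjoin_self hF u⟩, ?_, ?_⟩
  · rintro z ⟨p, hp, n, hn⟩ w ⟨q, hq, m, hm⟩
    refine ⟨p * q, hF.mul_mem_s9 hp hq, n + m, ?_⟩
    rw [pow_add, mul_mul_mul_comm]
    exact mul_le_mul' hn hm
  · rintro z ⟨p, hp, n, hn⟩ y
    exact ⟨p, hp, n, hn.trans le_sup_left⟩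

theorem exists_isPrime_not_mem {c : A} (hc : c ≠ ⊤) : ∃ P : Set A, IsPrime P ∧ c ∉ P := by
  let S : Set (Set A) := {F | IsFilter F ∧ c ∉ F}
  obtain ⟨P, -, hPmax⟩ := zorn_subset_nonempty S
    (fun K hKS hchain hne => ⟨⋃₀ K, ⟨isFilter_sUnion (fun F hF => (hKS hF).1) hchain hne,
      fun ⟨F, hF, hcF⟩ => (hKS hF).2 hcF⟩, fun _ => Set.subset_sUnion_of_mem⟩)
    {⊤} ⟨isFilter_top, hc⟩
  obtain ⟨hP, hcP⟩ := hPmax.prop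
  have hreach : ∀ u ∉ P, ∃ p ∈ P, ∃ n : ℕ, p * u ^ n ≤ c := fun u hu => by
    by_contra! h
    exact hu (hPmax.2 ⟨hP.adjoin u, fun ⟨p, hp, n, hn⟩ => h p hp n hn⟩
      (subset_adjoin P u) (mem_adjoin_self hP u))
  refine ⟨P, ⟨hP, fun h => hcP (h ▸ Set.mem_univ c), fun u v huv => ?_⟩, hcP⟩
  by_contra! ⟨hu, hv⟩
  obtain ⟨p, hp, n, hn⟩ := hreach u hu
  obtain ⟨q, hq, m, hm⟩ := hreach v hv
  have hle : p * q * (u ⊔ v) ^ (n + m) ≤ c :=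
    calc p * q * (u ⊔ v) ^ (n + m) ≤ p * q * (u ^ n ⊔ v ^ m) :=
          mul_le_mul_right (pow_sup_le_sup_pow u v n m) _
      _ = p * q * u ^ n ⊔ p * q * v ^ m := RL.mul_sup_s9 _ _ _
      _ ≤ c := sup_le
          ((mul_le_mul_left (mul_le_of_le_one_right' (le_one q)) _).trans hn)
          ((mul_le_mul_left (mul_le_of_le_one_left' (le_one p)) _).trans hm)
  exact hcP (hP.mem_of_le_s9 (hP.mul_mem_s9 (hP.mul_mem_s9 hp hq) (hP.pow_mem_s9 huv _)) hle)

theorem exists_minPrime_subset {P : Set A} (hP : IsPrime P) : ∃ m, MinPrime m ∧ m ⊆ P := by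
  obtain ⟨m, hmP, hmin⟩ := zorn_superset_nonempty {Q | IsPrime Q ∧ Q ⊆ P}
    (fun c hcS hchain ⟨Q, hQ⟩ => ⟨⋂₀ c,
      ⟨isPrime_sInter (fun Q hQ => (hcS hQ).1) hchain ⟨Q, hQ⟩,
      (Set.sInter_subset_of_mem hQ).trans (hcS hQ).2⟩, fun _ => Set.sInter_subset_of_mem⟩)
    P ⟨hP, le_rfl⟩
  exact ⟨m, ⟨hmin.prop.1, fun Q hQ hQm =>
    hQm.antisymm (hmin.2 ⟨hQ, hQm.trans hmP⟩ hQm)⟩, hmP⟩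

theorem perp_subset_of_isPrime {X P : Set A} (hP : IsPrime P) (hXP : ¬X ⊆ P) : perp X ⊆ P := by
  intro a ha
  obtain ⟨x, hxX, hxP⟩ := Set.not_subset.1 hXP
  exact (hP.2.2 x a (ha x hxX ▸ hP.1.top_mem)).resolve_left hxP

theorem exists_minPrime_not_mem_of_not_mem_perp {X : Set A} {a : A} (ha : a ∉ perp X) :
    ∃ m, MinPrime m ∧ ¬X ⊆ m ∧ a ∉ m := by
  obtain ⟨x, hxX, hxa⟩ : ∃ x ∈ X, x ⊔ a ≠ ⊤ := by simpa [perp] using ha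
  obtain ⟨P, hP, hxaP⟩ := exists_isPrime_not_mem hxa
  obtain ⟨m, hm, hmP⟩ := exists_minPrime_subset hP
  exact ⟨m, hm, fun hXm => hxaP (hP.1.2.2 x (hmP (hXm hxX)) a),
    fun ham => hxaP (hP.1.mem_of_le_s9 (hmP ham) le_sup_right)⟩

theorem perp_eq_sInter_of_subset_of_subset {X : Set A} {S : Set (Set A)}
    (hmin : {m | MinPrime m ∧ ¬X ⊆ m} ⊆ S) (hprime : S ⊆ {P | IsPrime P ∧ ¬X ⊆ P}) :
    perp X = ⋂₀ S := by
  refine (Set.subset_sInter fun P hP =>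
    perp_subset_of_isPrime (hprime hP).1 (hprime hP).2).antisymm ?_
  intro a ha
  by_contra hna
  obtain ⟨m, hm, hXm, ham⟩ := exists_minPrime_not_mem_of_not_mem_perp hna
  exact ham (ha m (hmin ⟨hm, hXm⟩))

end RL

theorem perp_eq_sInter {A : Type u} [ResiduatedLattice A] (X : Set A) :
    RL.perp X = ⋂₀ {P : Set A | RL.IsPrime P ∧ ¬ X ⊆ P} ∧
    RL.perp X = ⋂₀ {m : Set A | RL.MinPrime m ∧ ¬ X ⊆ m} :=
  ⟨RL.perp_eq_sInter_of_subset_of_subset (fun _ hm => ⟨hm.1.1, hm.2⟩) le_rfl,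
    RL.perp_eq_sInter_of_subset_of_subset le_rfl fun _ hm => ⟨hm.1.1, hm.2⟩⟩
end

section
/- Let Π be a collection of prime filters of a residuated lattice and F a filter contained in ⋂Π. If Π is F-closed (for any distinct P1, P2 ∈ Π there exist a1 ∉ P1 and a2 ∉ P2 with a1 ∨ a2 ∈ F), then every prime filter Q with ⋂Π ⊆ Q ⊆ P for some P ∈ Π is contained in a unique element of Π; in particular Π is an antichain. -/
universe u

namespace RL

variable {A : Type u} [ResiduatedLattice A]

def FClosed (F : Set A) (𝔓 : Set (Set A)) : Prop :=
  𝔓.Pairwise fun P1 P2 => ∃ a1 ∉ P1, ∃ a2 ∉ P2, a1 ⊔ a2 ∈ F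

theorem IsPrime.mem_or_mem {P : Set A} (hP : IsPrime P) {x y : A} (h : x ⊔ y ∈ P) :
    x ∈ P ∨ y ∈ P :=
  hP.2.2 x y h

namespace FClosed

variable {F : Set A} {𝔓 : Set (Set A)}

theorem eq_of_subset_of_subset (h𝔓 : FClosed F 𝔓) {Q : Set A} (hQ : IsPrime Q) (hFQ : F ⊆ Q)
    {P1 P2 : Set A} (hP1 : P1 ∈ 𝔓) (hP2 : P2 ∈ 𝔓) (hQP1 : Q ⊆ P1) (hQP2 : Q ⊆ P2) :
    P1 = P2 := by
  by_contra hne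
  obtain ⟨a1, ha1, a2, ha2, hjoin⟩ := h𝔓 hP1 hP2 hne
  rcases hQ.mem_or_mem (hFQ hjoin) with h | h
  · exact ha1 (hQP1 h)
  · exact ha2 (hQP2 h)

theorem existsUnique_of_subset (h𝔓 : FClosed F 𝔓) {Q : Set A} (hQ : IsPrime Q) (hFQ : F ⊆ Q)
    {P : Set A} (hP : P ∈ 𝔓) (hQP : Q ⊆ P) : ∃! P : Set A, P ∈ 𝔓 ∧ Q ⊆ P :=
  ⟨P, ⟨hP, hQP⟩, fun _ ⟨hP', hQP'⟩ => h𝔓.eq_of_subset_of_subset hQ hFQ hP' hP hQP' hQP⟩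

theorem isAntichain (h𝔓 : FClosed F 𝔓) (hprime : ∀ P ∈ 𝔓, IsPrime P) (hF : F ⊆ ⋂₀ 𝔓) :
    IsAntichain (· ⊆ ·) 𝔓 := fun _ hP1 _ hP2 hne hsub =>
  hne (h𝔓.eq_of_subset_of_subset (hprime _ hP1) (fun _ ha => hF ha _ hP1) hP1 hP2 subset_rfl hsub)

end FClosed

end RL

theorem Fclosed_unique_and_antichain_general {A : Type u} [ResiduatedLattice A]
    (𝔓 : Set (Set A)) (h𝔓 : ∀ P ∈ 𝔓, RL.IsPrime P)
    (F : Set A) (hF𝔓 : F ⊆ ⋂₀ 𝔓)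
    (hclosed : ∀ P1 ∈ 𝔓, ∀ P2 ∈ 𝔓, P1 ≠ P2 →
      ∃ a1 ∉ P1, ∃ a2 ∉ P2, a1 ⊔ a2 ∈ F) :
    (∀ Q : Set A, RL.IsPrime Q → ⋂₀ 𝔓 ⊆ Q → (∃ P ∈ 𝔓, Q ⊆ P) →
      ∃! P : Set A, P ∈ 𝔓 ∧ Q ⊆ P) ∧
    IsAntichain (· ⊆ ·) 𝔓 := by
  have hFclosed : RL.FClosed F 𝔓 := hclosed
  refine ⟨fun Q hQ h𝔓Q ⟨P, hP, hQP⟩ => ?_, hFclosed.isAntichain h𝔓 hF𝔓⟩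
  exact hFclosed.existsUnique_of_subset hQ (hF𝔓.trans h𝔓Q) hP hQP

theorem Fclosed_unique_and_antichain {A : Type u} [ResiduatedLattice A]
    (𝔓 : Set (Set A)) (h𝔓 : ∀ P ∈ 𝔓, RL.IsPrime P)
    (F : Set A) (hF : RL.IsFilter F) (hF𝔓 : F ⊆ ⋂₀ 𝔓)
    (hclosed : ∀ P1 ∈ 𝔓, ∀ P2 ∈ 𝔓, P1 ≠ P2 →
      ∃ a1 ∉ P1, ∃ a2 ∉ P2, a1 ⊔ a2 ∈ F) :
    (∀ Q : Set A, RL.IsPrime Q → ⋂₀ 𝔓 ⊆ Q → (∃ P ∈ 𝔓, Q ⊆ P) →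
      ∃! P : Set A, P ∈ 𝔓 ∧ Q ⊆ P) ∧
    IsAntichain (· ⊆ ·) 𝔓 :=
  Fclosed_unique_and_antichain_general 𝔓 h𝔓 F hF𝔓 hclosed
end

section
/- A collection Π of prime filters of a residuated lattice with the hull-kernel topology is Hausdorff if and only if Π is ⋂Π-closed, i.e., for any distinct P1, P2 ∈ Π there exist a1 ∉ P1 and a2 ∉ P2 with a1 ∨ a2 ∈ ⋂Π. -/
universe u

open RL in
/-- The hull-kernel topology on a collection of prime filters. -/
def HKtop {A : Type u} [ResiduatedLattice A] (𝔓 : Set (Set A)) : TopologicalSpace ↥𝔓 :=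
  TopologicalSpace.generateFrom {S : Set ↥𝔓 | ∃ x : A, S = {P : ↥𝔓 | x ∉ P.1}}

theorem TopologicalSpace.IsTopologicalBasis.t2Space_iff_of_range {X ι : Type*}
    [TopologicalSpace X] {b : ι → Set X} (hb : TopologicalSpace.IsTopologicalBasis (Set.range b)) :
    T2Space X ↔ Pairwise fun x y : X => ∃ i, x ∈ b i ∧ ∃ j, y ∈ b j ∧ Disjoint (b i) (b j) := by
  simp only [t2Space_iff_disjoint_nhds, hb.nhds_hasBasis.disjoint_iff hb.nhds_hasBasis,
    Set.mem_range, exists_exists_eq_and, and_assoc]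

namespace RL

/-- The basic open set `d(x)` of the hull-kernel topology. -/
def basicOpen {A : Type*} (𝔓 : Set (Set A)) (x : A) : Set ↥𝔓 := {P | x ∉ P.1}

theorem basicOpen_eq_empty_iff {A : Type*} {𝔓 : Set (Set A)} {x : A} :
    basicOpen 𝔓 x = ∅ ↔ x ∈ ⋂₀ 𝔓 := by
  simp [basicOpen, Set.eq_empty_iff_forall_notMem]

variable {A : Type u} [ResiduatedLattice A] {P : Set A}

theorem IsPrime.sup_mem_iff (hP : IsPrime P) {x y : A} : x ⊔ y ∈ P ↔ x ∈ P ∨ y ∈ P := by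
  obtain ⟨⟨-, -, hsup⟩, -, hprime⟩ := hP
  refine ⟨hprime x y, ?_⟩
  rintro (hx | hy)
  · exact hsup x hx y
  · exact sup_comm y x ▸ hsup y hy x

theorem IsPrime.bot_notMem (hP : IsPrime P) : (⊥ : A) ∉ P := by
  obtain ⟨⟨-, -, hsup⟩, hne, -⟩ := hP
  exact fun hbot => hne <| Set.eq_univ_of_forall fun y => bot_sup_eq y ▸ hsup ⊥ hbot y

variable {𝔓 : Set (Set A)} (h𝔓 : ∀ P ∈ 𝔓, IsPrime P)
include h𝔓

theorem basicOpen_inter_basicOpen (x y : A) :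
    basicOpen 𝔓 x ∩ basicOpen 𝔓 y = basicOpen 𝔓 (x ⊔ y) := by
  ext P
  simp [basicOpen, (h𝔓 P.1 P.2).sup_mem_iff, not_or]

theorem isTopologicalBasis_basicOpen :
    @TopologicalSpace.IsTopologicalBasis _ (HKtop 𝔓) (Set.range (basicOpen 𝔓)) := by
  let _ := HKtop 𝔓
  refine ⟨?_, ?_, congrArg _ <| Set.ext fun _ => exists_congr fun _ => eq_comm⟩
  · rintro _ ⟨x, rfl⟩ _ ⟨y, rfl⟩ P hP
    rw [basicOpen_inter_basicOpen h𝔓] at hP ⊢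
    exact ⟨_, ⟨x ⊔ y, rfl⟩, hP, le_rfl⟩
  · exact Set.sUnion_eq_univ_iff.2 fun P => ⟨_, ⟨⊥, rfl⟩, (h𝔓 P.1 P.2).bot_notMem⟩

end RL

theorem hk_t2_iff_closed {A : Type u} [ResiduatedLattice A]
    (𝔓 : Set (Set A)) (h𝔓 : ∀ P ∈ 𝔓, RL.IsPrime P) :
    @T2Space ↥𝔓 (HKtop 𝔓) ↔
      ∀ P1 ∈ 𝔓, ∀ P2 ∈ 𝔓, P1 ≠ P2 →
        ∃ a1 ∉ P1, ∃ a2 ∉ P2, a1 ⊔ a2 ∈ ⋂₀ 𝔓 := by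
  let _ := HKtop 𝔓
  rw [(RL.isTopologicalBasis_basicOpen h𝔓).t2Space_iff_of_range]
  simp only [Set.disjoint_iff_inter_eq_empty, RL.basicOpen_inter_basicOpen h𝔓,
    RL.basicOpen_eq_empty_iff]
  simp only [Pairwise, Subtype.forall, ne_eq, Subtype.mk.injEq]
  rfl
end

section
/- Let A be a residuated lattice. In the hull-kernel topology on Min(A) (the set of minimal prime filters), for every x ∈ A one has d(x) = h(x^⊥) and h(x) = d(x^⊥); in particular each basic open set d(x) is clopen, so Min(A) is a zero-dimensional (hence totally disconnected) Hausdorff space. -/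
universe u

namespace RL

open ResiduatedLattice

variable {A : Type u} [ResiduatedLattice A]

theorem rl_mul_mono_left {a b c : A} (h : a ≤ b) : mul a c ≤ mul b c :=
  (adjoint _ _ _).2 (h.trans ((adjoint b c (mul b c)).1 le_rfl))

theorem rl_mul_mono_right {a b c : A} (h : b ≤ c) : mul a b ≤ mul a c := by
  rw [ResiduatedLattice.mul_comm a b, ResiduatedLattice.mul_comm a c]
  exact rl_mul_mono_left h

theorem rl_mul_le_left {a b : A} : mul a b ≤ a :=
  (rl_mul_mono_right le_top).trans_eq (mul_top a)

theorem rl_mul_le_right {a b : A} : mul a b ≤ b := by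
  rw [ResiduatedLattice.mul_comm]; exact rl_mul_le_left

theorem rl_top_mul (a : A) : mul (⊤ : A) a = a := by
  rw [ResiduatedLattice.mul_comm]; exact mul_top a

theorem rl_mul_left_comm (a b c : A) : mul a (mul b c) = mul b (mul a c) := by
  rw [← ResiduatedLattice.mul_assoc, ResiduatedLattice.mul_comm a b,
    ResiduatedLattice.mul_assoc]

theorem rl_sup_mul_le {a b c : A} : mul (a ⊔ b) c ≤ mul a c ⊔ mul b c :=
  (adjoint _ _ _).2 (sup_le ((adjoint _ _ _).1 le_sup_left) ((adjoint _ _ _).1 le_sup_right))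

theorem rl_mul_sup_le {a b c : A} : mul a (b ⊔ c) ≤ mul a b ⊔ mul a c := by
  rw [ResiduatedLattice.mul_comm]
  refine (adjoint _ _ _).2 (sup_le ?_ ?_)
  · exact (adjoint _ _ _).1 (by rw [ResiduatedLattice.mul_comm]; exact le_sup_left)
  · exact (adjoint _ _ _).1 (by rw [ResiduatedLattice.mul_comm]; exact le_sup_right)

/-- powers -/
def pw (x : A) : ℕ → A
  | 0 => ⊤
  | n + 1 => mul x (pw x n)

theorem pw_add (x : A) (n m : ℕ) : pw x (n + m) = mul (pw x n) (pw x m) := by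
  induction n with
  | zero => simp [pw, rl_top_mul]
  | succ n ih =>
    have e : n + 1 + m = (n + m) + 1 := by omega
    rw [e]
    show mul x (pw x (n + m)) = mul (mul x (pw x n)) (pw x m)
    rw [ih, ResiduatedLattice.mul_assoc]

theorem pw_sup (x y : A) : ∀ n m : ℕ, pw (x ⊔ y) (n + m) ≤ pw x n ⊔ pw y m := by
  intro n
  induction n with
  | zero => intro m; exact le_sup_left.trans' le_top
  | succ n ih =>
    intro m
    induction m with
    | zero => exact le_top.trans le_sup_right
    | succ m ihm =>
      have e : (n + 1) + (m + 1) = (n + (m + 1)) + 1 := by omega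
      rw [e]
      show mul (x ⊔ y) (pw (x ⊔ y) (n + (m + 1))) ≤ pw x (n + 1) ⊔ pw y (m + 1)
      calc mul (x ⊔ y) (pw (x ⊔ y) (n + (m + 1)))
          ≤ mul x (pw (x ⊔ y) (n + (m + 1))) ⊔ mul y (pw (x ⊔ y) (n + (m + 1))) := rl_sup_mul_le
        _ ≤ pw x (n + 1) ⊔ pw y (m + 1) := by
            apply sup_le
            · calc mul x (pw (x ⊔ y) (n + (m + 1)))
                  ≤ mul x (pw x n ⊔ pw y (m + 1)) := rl_mul_mono_right (ih (m + 1))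
                _ ≤ mul x (pw x n) ⊔ mul x (pw y (m + 1)) := rl_mul_sup_le
                _ ≤ pw x (n + 1) ⊔ pw y (m + 1) :=
                    sup_le_sup le_rfl rl_mul_le_right
            · have e2 : n + (m + 1) = (n + 1) + m := by omega
              calc mul y (pw (x ⊔ y) (n + (m + 1)))
                  ≤ mul y (pw x (n + 1) ⊔ pw y m) := by
                    rw [e2]; exact rl_mul_mono_right ihm
                _ ≤ mul y (pw x (n + 1)) ⊔ mul y (pw y m) := rl_mul_sup_le
                _ ≤ pw x (n + 1) ⊔ pw y (m + 1) :=
                    sup_le_sup rl_mul_le_right le_rfl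

theorem filter_top_mem {F : Set A} (hF : IsFilter F) : (⊤ : A) ∈ F := by
  obtain ⟨⟨a, ha⟩, -, hj⟩ := hF
  have := hj a ha ⊤
  rwa [sup_top_eq] at this

theorem filter_mem_of_le {F : Set A} (hF : IsFilter F) {a b : A} (ha : a ∈ F) (h : a ≤ b) :
    b ∈ F := by
  have := hF.2.2 a ha b
  rwa [sup_eq_right.2 h] at this

theorem filter_pw_mem {F : Set A} (hF : IsFilter F) {x : A} (hx : x ∈ F) (n : ℕ) :
    pw x n ∈ F := by
  induction n with
  | zero => exact filter_top_mem hF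
  | succ n ih => exact hF.2.1 x hx _ ih

/-- enlarge a filter by one element -/
def ext (F : Set A) (x : A) : Set A := {z | ∃ f ∈ F, ∃ n : ℕ, mul f (pw x n) ≤ z}

theorem ext_isFilter {F : Set A} (hF : IsFilter F) (x : A) : IsFilter (ext F x) := by
  refine ⟨⟨⊤, ⊤, filter_top_mem hF, 0, le_top⟩, ?_, ?_⟩
  · rintro z ⟨f, hf, n, hn⟩ w ⟨g, hg, m, hm⟩
    refine ⟨mul f g, hF.2.1 f hf g hg, n + m, ?_⟩
    rw [pw_add]
    have e : mul (mul f g) (mul (pw x n) (pw x m))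
        = mul (mul f (pw x n)) (mul g (pw x m)) := by
      rw [ResiduatedLattice.mul_assoc f g, rl_mul_left_comm g (pw x n),
        ← ResiduatedLattice.mul_assoc f (pw x n)]
    rw [e]
    exact (rl_mul_mono_left hn).trans (rl_mul_mono_right hm)
  · rintro z ⟨f, hf, n, hn⟩ y
    exact ⟨f, hf, n, hn.trans le_sup_left⟩

theorem subset_ext {F : Set A} (hF : IsFilter F) (x : A) : F ⊆ ext F x := by
  intro f hf
  exact ⟨f, hf, 0, le_of_eq (mul_top f)⟩

theorem mem_ext_self {F : Set A} (hF : IsFilter F) (x : A) : x ∈ ext F x := by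
  refine ⟨⊤, filter_top_mem hF, 1, ?_⟩
  show mul ⊤ (mul x (pw x 0)) ≤ x
  rw [rl_top_mul]
  show mul x ⊤ ≤ x
  rw [mul_top]

/-- A maximal filter disjoint from a `∨`-closed set is prime. -/
theorem maximal_isPrime {C Q : Set A} (hC : VClosed C) (hQ : IsFilter Q)
    (hdis : Q ∩ C = ∅)
    (hmax : ∀ G : Set A, IsFilter G → G ∩ C = ∅ → Q ⊆ G → G = Q) : IsPrime Q := by
  have hnotC : ∀ c ∈ C, c ∉ Q := by
    intro c hc hq
    exact absurd (Set.mem_inter hq hc) (by rw [hdis]; exact id)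
  refine ⟨hQ, ?_, ?_⟩
  · obtain ⟨c, hc⟩ := hC.1
    intro h
    exact hnotC c hc (h ▸ Set.mem_univ c)
  · intro x y hxy
    by_contra h
    push_neg at h
    obtain ⟨hx, hy⟩ := h
    -- ext Q x meets C
    have hx' : ∃ c ∈ C, c ∈ ext Q x := by
      by_contra hc
      push_neg at hc
      have : ext Q x ∩ C = ∅ := by
        ext c; simp only [Set.mem_inter_iff, Set.mem_empty_iff_false, iff_false, not_and]
        exact fun h1 h2 => hc c h2 h1
      exact hx ((hmax _ (ext_isFilter hQ x) this (subset_ext hQ x)) ▸ mem_ext_self hQ x)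
    have hy' : ∃ c ∈ C, c ∈ ext Q y := by
      by_contra hc
      push_neg at hc
      have : ext Q y ∩ C = ∅ := by
        ext c; simp only [Set.mem_inter_iff, Set.mem_empty_iff_false, iff_false, not_and]
        exact fun h1 h2 => hc c h2 h1
      exact hy ((hmax _ (ext_isFilter hQ y) this (subset_ext hQ y)) ▸ mem_ext_self hQ y)
    obtain ⟨c1, hc1, f, hf, n, hn⟩ := hx'
    obtain ⟨c2, hc2, g, hg, m, hm⟩ := hy'
    have hcc : c1 ⊔ c2 ∈ C := hC.2 c1 hc1 c2 hc2
    -- show c1 ⊔ c2 ∈ Q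
    have hbig : mul (mul f g) (pw (x ⊔ y) (n + m)) ∈ Q :=
      hQ.2.1 _ (hQ.2.1 f hf g hg) _ (filter_pw_mem hQ hxy (n + m))
    have hle : mul (mul f g) (pw (x ⊔ y) (n + m)) ≤ c1 ⊔ c2 := by
      calc mul (mul f g) (pw (x ⊔ y) (n + m))
          ≤ mul (mul f g) (pw x n ⊔ pw y m) := rl_mul_mono_right (pw_sup x y n m)
        _ ≤ mul (mul f g) (pw x n) ⊔ mul (mul f g) (pw y m) := rl_mul_sup_le
        _ ≤ mul f (pw x n) ⊔ mul g (pw y m) := by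
            apply sup_le_sup
            · exact rl_mul_mono_left rl_mul_le_left
            · exact rl_mul_mono_left rl_mul_le_right
        _ ≤ c1 ⊔ c2 := sup_le_sup hn hm
    exact hnotC _ hcc (filter_mem_of_le hQ hbig hle)

/-- Zorn: a filter disjoint from a `∨`-closed set extends to a maximal such filter. -/
theorem exists_maximal_filter {C F0 : Set A} (hC : VClosed C) (hF : IsFilter F0)
    (hdis : F0 ∩ C = ∅) :
    ∃ Q : Set A, IsFilter Q ∧ F0 ⊆ Q ∧ Q ∩ C = ∅ ∧
      ∀ G : Set A, IsFilter G → G ∩ C = ∅ → Q ⊆ G → G = Q := by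
  set S : Set (Set A) := {G | IsFilter G ∧ G ∩ C = ∅} with hS
  have hzorn := zorn_subset_nonempty S ?_ F0 ⟨hF, hdis⟩
  · obtain ⟨Q, hF0Q, hQS, hQmax⟩ := hzorn
    exact ⟨Q, hQS.1, hF0Q, hQS.2, fun G hG hGC hQG =>
      subset_antisymm (hQmax ⟨hG, hGC⟩ hQG) hQG⟩
  · intro c hcS hchain hcne
    refine ⟨⋃₀ c, ⟨⟨?_, ?_, ?_⟩, ?_⟩, fun s hs => Set.subset_sUnion_of_mem hs⟩
    · obtain ⟨G, hG⟩ := hcne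
      obtain ⟨a, ha⟩ := (hcS hG).1.1
      exact ⟨a, G, hG, ha⟩
    · rintro a ⟨G1, hG1, ha⟩ b ⟨G2, hG2, hb⟩
      rcases hchain.total hG1 hG2 with h | h
      · exact ⟨G2, hG2, (hcS hG2).1.2.1 a (h ha) b hb⟩
      · exact ⟨G1, hG1, (hcS hG1).1.2.1 a ha b (h hb)⟩
    · rintro a ⟨G1, hG1, ha⟩ y
      exact ⟨G1, hG1, (hcS hG1).1.2.2 a ha y⟩
    · ext a
      simp only [Set.mem_inter_iff, Set.mem_sUnion, Set.mem_empty_iff_false, iff_false, not_and]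
      rintro ⟨G1, hG1, ha⟩ haC
      have := (hcS hG1).2
      exact absurd (Set.mem_inter ha haC) (by rw [this]; exact id)

/-- The key hard lemma: a minimal prime containing `x` omits some element of `perp {x}`. -/
theorem minPrime_exists_perp {m : Set A} (hm : MinPrime m) {x : A} (hx : x ∈ m) :
    ∃ a, a ∈ perp {x} ∧ a ∉ m := by
  by_contra h
  push_neg at h
  -- h : ∀ a ∈ perp {x}, a ∈ m
  have hproper : m ≠ Set.univ := hm.1.2.1
  have hmtop : (⊤ : A) ∈ m := filter_top_mem hm.1.1
  set C : Set A := insert x {c | ∃ a, a ∉ m ∧ c = x ⊔ a} with hCdef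
  have hCV : VClosed C := by
    constructor
    · exact ⟨x, Set.mem_insert x _⟩
    · rintro c1 (rfl | ⟨a, ha, rfl⟩) c2 (rfl | ⟨b, hb, rfl⟩)
      · rw [sup_idem]; exact Set.mem_insert _ _
      · rw [← sup_assoc, sup_idem]; exact Set.mem_insert_of_mem _ ⟨b, hb, rfl⟩
      · rw [sup_comm, ← sup_assoc, sup_idem]; exact Set.mem_insert_of_mem _ ⟨a, ha, rfl⟩
      · refine Set.mem_insert_of_mem _ ⟨a ⊔ b, ?_, ?_⟩
        · intro hab
          rcases hm.1.2.2 a b hab with h1 | h1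
          · exact ha h1
          · exact hb h1
        · rw [sup_sup_sup_comm, sup_idem]
  have htopC : (⊤ : A) ∉ C := by
    rintro (htx | ⟨a, ha, hxa⟩)
    · -- x = ⊤
      obtain ⟨b, hb⟩ : ∃ b, b ∉ m := by
        by_contra hb
        push_neg at hb
        exact hproper (Set.eq_univ_of_forall hb)
      refine hb (h b ?_)
      intro z hz
      rw [Set.mem_singleton_iff.1 hz, ← htx, top_sup_eq]
    · refine ha (h a ?_)
      intro z hz
      rw [Set.mem_singleton_iff.1 hz, ← hxa]
  have hF0 : IsFilter ({⊤} : Set A) := by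
    refine ⟨⟨⊤, rfl⟩, ?_, ?_⟩
    · rintro a rfl b rfl
      show mul ⊤ ⊤ ∈ ({⊤} : Set A)
      rw [mul_top]; rfl
    · rintro a rfl y
      show (⊤ : A) ⊔ y ∈ ({⊤} : Set A)
      rw [top_sup_eq]; rfl
  have hdis : ({⊤} : Set A) ∩ C = ∅ := by
    ext a
    simp only [Set.mem_inter_iff, Set.mem_singleton_iff, Set.mem_empty_iff_false, iff_false,
      not_and]
    rintro rfl
    exact htopC
  obtain ⟨Q, hQF, hQtop, hQC, hQmax⟩ := exists_maximal_filter hCV hF0 hdis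
  have hQprime : IsPrime Q := maximal_isPrime hCV hQF hQC hQmax
  have hnotC : ∀ c ∈ C, c ∉ Q := by
    intro c hc hq
    exact absurd (Set.mem_inter hq hc) (by rw [hQC]; exact id)
  have hQm : Q ⊆ m := by
    intro q hq
    by_contra hqm
    exact hnotC (x ⊔ q) (Set.mem_insert_of_mem _ ⟨q, hqm, rfl⟩)
      (filter_mem_of_le hQF hq le_sup_right)
  have : Q = m := hm.2 Q hQprime hQm
  exact hnotC x (Set.mem_insert x _) (this ▸ hx)

/-- Key characterization of minimal primes. -/
theorem minPrime_not_mem_iff {m : Set A} (hm : MinPrime m) (x : A) :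
    x ∉ m ↔ perp {x} ⊆ m := by
  constructor
  · intro hx a ha
    have hxa : x ⊔ a = ⊤ := ha x rfl
    have : x ⊔ a ∈ m := hxa ▸ filter_top_mem hm.1.1
    rcases hm.1.2.2 x a this with h | h
    · exact absurd h hx
    · exact h
  · intro hperp hx
    obtain ⟨a, ha, ham⟩ := minPrime_exists_perp hm hx
    exact ham (hperp ha)

end RL

/-- The space of minimal prime filters. -/
def MinSpace (A : Type u) [ResiduatedLattice A] : Type u := {m : Set A // RL.MinPrime m}

instance (A : Type u) [ResiduatedLattice A] : TopologicalSpace (MinSpace A) :=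
  TopologicalSpace.generateFrom {S : Set (MinSpace A) | ∃ x : A, S = {m : MinSpace A | x ∉ m.1}}

theorem min_space_clopen_td_t2 {A : Type u} [ResiduatedLattice A] :
    (∀ x : A,
      {m : MinSpace A | x ∉ m.1} = {m : MinSpace A | RL.perp {x} ⊆ m.1} ∧
      {m : MinSpace A | x ∈ m.1} = {m : MinSpace A | ¬ RL.perp {x} ⊆ m.1} ∧
      IsClopen {m : MinSpace A | x ∉ m.1}) ∧
    TotallyDisconnectedSpace (MinSpace A) ∧ T2Space (MinSpace A) := by
  have key : ∀ (x : A) (m : MinSpace A), x ∉ m.1 ↔ RL.perp {x} ⊆ m.1 :=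
    fun x m => RL.minPrime_not_mem_iff m.2 x
  have key2 : ∀ (x : A) (m : MinSpace A), x ∈ m.1 ↔ ¬ RL.perp {x} ⊆ m.1 := by
    intro x m
    constructor
    · intro h hp
      exact (key x m).2 hp h
    · intro h
      by_contra hx
      exact h ((key x m).1 hx)
  have hopen : ∀ x : A, IsOpen {m : MinSpace A | x ∉ m.1} := fun x =>
    TopologicalSpace.isOpen_generateFrom_of_mem ⟨x, rfl⟩
  have hclosed : ∀ x : A, IsClosed {m : MinSpace A | x ∉ m.1} := by
    intro x
    rw [← isOpen_compl_iff]
    have hc : {m : MinSpace A | x ∉ m.1}ᶜ = ⋃ a ∈ RL.perp {x}, {m : MinSpace A | a ∉ m.1} := by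
      ext m
      simp only [Set.mem_compl_iff, Set.mem_setOf_eq, not_not, Set.mem_iUnion, exists_prop]
      constructor
      · intro hx
        by_contra hcon
        push_neg at hcon
        exact (key2 x m).1 hx (fun a ha => hcon a ha)
      · rintro ⟨a, ha, ham⟩
        by_contra hx
        exact ham ((key x m).1 hx ha)
    rw [hc]
    exact isOpen_biUnion fun a _ => hopen a
  have diff : ∀ m n : MinSpace A, m ≠ n → ∃ x : A, x ∈ m.1 ∧ x ∉ n.1 := by
    intro m n hmn
    by_contra hcon
    push_neg at hcon
    exact hmn (Subtype.ext (n.2.2 m.1 m.2.1 hcon))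
  have hsep : ∀ m n : MinSpace A, m ≠ n →
      ∃ u v : Set (MinSpace A), IsOpen u ∧ IsOpen v ∧ m ∈ u ∧ n ∈ v ∧
        u ∪ v = Set.univ ∧ Disjoint u v := by
    intro m n hmn
    obtain ⟨x, hxm, hxn⟩ := diff m n hmn
    have hco : {k : MinSpace A | x ∈ k.1} = {k : MinSpace A | x ∉ k.1}ᶜ := by
      ext k
      simp
    refine ⟨{k : MinSpace A | x ∈ k.1}, {k : MinSpace A | x ∉ k.1}, ?_, hopen x, hxm, hxn,
      ?_, ?_⟩
    · rw [hco]
      exact (hclosed x).isOpen_compl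
    · ext k
      simp [em]
    · rw [Set.disjoint_left]
      intro k hk hk'
      exact hk' hk
  have hts : TotallySeparatedSpace (MinSpace A) := by
    refine ⟨fun m _ n _ hmn => ?_⟩
    obtain ⟨u, v, hu, hv, hmu, hnv, hcov, hdis⟩ := hsep m n hmn
    exact ⟨u, v, hu, hv, hmu, hnv, hcov ▸ le_rfl, hdis⟩
  refine ⟨?_, ?_, ?_⟩
  · intro x
    exact ⟨Set.ext fun m => key x m, Set.ext fun m => key2 x m, ⟨hclosed x, hopen x⟩⟩
  · exact @TotallySeparatedSpace.totallyDisconnectedSpace _ _ hts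
  · refine ⟨fun m n hmn => ?_⟩
    obtain ⟨u, v, hu, hv, hmu, hnv, _, hdis⟩ := hsep m n hmn
    exact ⟨u, v, hu, hv, hmu, hnv, hdis⟩
end
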